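/- Let f: ℤ_p → ℤ_p be compatible such that φ_0 and every φ_{k,x̄_{k−1}} (k = 1,2,…) are permutations of {0,…,p−1}. Then f is ergodic with respect to μ_p if and only if (1) φ_0 is a transitive permutation of {0,…,p−1}, and (2) for every k = 1,2,… the permutation F_{k,0} = φ_{k,f_{k−1}^{(p^k−1)}(0)} ∘ φ_{k,f_{k−1}^{(p^k−2)}(0)} ∘ ⋯ ∘ φ_{k,0} is a transitive permutation of {0,…,p−1}. -/
import Mathlib


open MeasureTheory Function

variable {p : ℕ} [hp : Fact p.Prime]

noncomputable instance : MeasurableSpace ℤ_[p] := borel _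
instance : BorelSpace ℤ_[p] := ⟨rfl⟩

/-- The Haar measure on `ℤ_[p]`, normalized so that `μp p ℤ_[p] = 1`. -/
noncomputable def μp (p : ℕ) [Fact p.Prime] : Measure ℤ_[p] :=
  Measure.addHaarMeasure ⊤

/-- A function `f : ℤ_[p] → ℤ_[p]` is compatible if it is 1-Lipschitz w.r.t. `|·|_p`. -/
def Compatible (f : ℤ_[p] → ℤ_[p]) : Prop :=
  ∀ x y : ℤ_[p], ‖f x - f y‖ ≤ ‖x - y‖

/-- The `k`-th base-`p` digit of `x ∈ ℤ_[p]`, as a natural number in `{0,…,p-1}`. -/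
noncomputable def digitN (x : ℤ_[p]) (k : ℕ) : ℕ := x.appr (k + 1) / p ^ k

/-- The `k`-th base-`p` digit of `x ∈ ℤ_[p]`, as an element of `ZMod p`. -/
noncomputable def digit (x : ℤ_[p]) (k : ℕ) : ZMod p := (digitN x k : ZMod p)

/-- `f` has coordinate representation given by the family `φ`: the `k`-th digit of `f x`
is `φ k xb x_k`, where `xb = x mod p^k ∈ {0,…,p^k−1}` encodes the digits `(x_0,…,x_{k-1})`
and `x_k` is the `k`-th digit of `x`. -/
def CoordRep (f : ℤ_[p] → ℤ_[p]) (φ : ℕ → ℕ → ZMod p → ZMod p) : Prop :=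
  ∀ (x : ℤ_[p]) (k : ℕ), digit (f x) k = φ k (x.appr k) (digit x k)

/-- The reduction of `f` modulo `p^k`, acting on natural-number residues `{0,…,p^k−1}`
(for `k = k'+1` this is the map `f_{k'}` on `ℤ/p^k ℤ`). -/
noncomputable def red (f : ℤ_[p] → ℤ_[p]) (k : ℕ) (m : ℕ) : ℕ := (f (m : ℤ_[p])).appr k

/-- A map of `ZMod n` is transitive (a single-cycle permutation) iff every point can be
reached from every point by iteration. -/
def IsTransitive {n : ℕ} (g : ZMod n → ZMod n) : Prop :=
  ∀ a b : ZMod n, ∃ s : ℕ, g^[s] a = b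

/-- A self-map of the residues `{0,…,N−1}` is transitive (single cycle). -/
def TransitiveOn (g : ℕ → ℕ) (N : ℕ) : Prop :=
  ∀ a, a < N → ∀ b, b < N → ∃ s : ℕ, g^[s] a = b

/-- `compSeq ψ g xb n = ψ (g^[n-1] xb) ∘ ⋯ ∘ ψ (g xb) ∘ ψ xb`. -/
def compSeq (ψ : ℕ → ZMod p → ZMod p) (g : ℕ → ℕ) (xb : ℕ) : ℕ → ZMod p → ZMod p
  | 0 => id
  | n + 1 => ψ (g^[n] xb) ∘ compSeq ψ g xb n

/-- The permutation `F_{k,xb} = φ_{k,f_{k-1}^{(p^k-1)}(xb)} ∘ ⋯ ∘ φ_{k,xb}` of `ZMod p`. -/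
noncomputable def Fperm (φ : ℕ → ℕ → ZMod p → ZMod p) (f : ℤ_[p] → ℤ_[p]) (k xb : ℕ) :
    ZMod p → ZMod p :=
  compSeq (φ k) (red f k) xb (p ^ k)

/-! ### Auxiliary lemmas for the proof -/

variable {f : ℤ_[p] → ℤ_[p]} {φ : ℕ → ℕ → ZMod p → ZMod p}

theorem pk_pos (k : ℕ) : 0 < p ^ k := pow_pos hp.out.pos k

theorem appr_unique (x : ℤ_[p]) (k m : ℕ) (hm : m < p ^ k)
    (h : x - (m : ℤ_[p]) ∈ Ideal.span {(p : ℤ_[p]) ^ k}) : x.appr k = m := by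
  have h2 := PadicInt.appr_spec k x
  have h1 := PadicInt.zmod_congr_of_sub_mem_span k x (x.appr k) m (by simpa using h2)
    (by simpa using h)
  have h3 : ((x.appr k : ZMod (p ^ k))).val = ((m : ZMod (p ^ k))).val := by rw [h1]
  haveI : NeZero (p ^ k) := ⟨Nat.pos_iff_ne_zero.mp (pk_pos k)⟩
  rwa [ZMod.val_cast_of_lt (PadicInt.appr_lt x k), ZMod.val_cast_of_lt hm] at h3

theorem appr_natCast (m k : ℕ) : ((m : ℤ_[p])).appr k = m % p ^ k := by
  apply appr_unique _ _ _ (Nat.mod_lt _ (pk_pos k))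
  rw [Ideal.mem_span_singleton]
  have h4 : (m : ℤ_[p]) - ((m % p ^ k : ℕ) : ℤ_[p]) = ((p ^ k * (m / p ^ k) : ℕ) : ℤ_[p]) := by
    rw [← Nat.cast_sub (Nat.mod_le m (p^k))]
    congr 1
    have := Nat.div_add_mod m (p ^ k)
    omega
  rw [h4]
  push_cast
  exact Dvd.intro _ rfl

theorem appr_succ (x : ℤ_[p]) (k : ℕ) :
    x.appr (k + 1) = x.appr k + p ^ k * digitN x k ∧ digitN x k < p := by
  obtain ⟨c, hc⟩ := PadicInt.dvd_appr_sub_appr x k (k + 1) (by omega)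
  have hmono := PadicInt.appr_mono x (show k ≤ k + 1 by omega)
  have hlt := PadicInt.appr_lt x (k + 1)
  have hltk := PadicInt.appr_lt x k
  have heq : x.appr (k + 1) = x.appr k + p ^ k * c := by omega
  have hd : digitN x k = c := by
    unfold digitN
    rw [heq, Nat.add_mul_div_left _ _ (pk_pos k), Nat.div_eq_of_lt hltk, zero_add]
  refine ⟨by rw [hd]; exact heq, ?_⟩
  rw [hd, pow_succ] at *
  nlinarith [pk_pos (p := p) k]

theorem digitN_lt (x : ℤ_[p]) (k : ℕ) : digitN x k < p := (appr_succ x k).2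

theorem appr_mod (x : ℤ_[p]) (k : ℕ) : x.appr (k + 1) % p ^ k = x.appr k := by
  rw [(appr_succ x k).1, Nat.add_mul_mod_self_left, Nat.mod_eq_of_lt (PadicInt.appr_lt x k)]

theorem digitN_eq_div (x : ℤ_[p]) (k : ℕ) : digitN x k = x.appr (k+1) / p ^ k := rfl

theorem appr_eq_of_sub_mem (x y : ℤ_[p]) (k : ℕ) (h : x - y ∈ Ideal.span {(p : ℤ_[p]) ^ k}) :
    x.appr k = y.appr k := by
  apply appr_unique _ _ _ (PadicInt.appr_lt y k)
  have h2 := PadicInt.appr_spec k y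
  have : x - (y.appr k : ℤ_[p]) = (x - y) + (y - y.appr k) := by ring
  rw [this]
  exact Ideal.add_mem _ h h2

theorem compatible_sub_mem (hf : Compatible f) (x y : ℤ_[p]) (k : ℕ)
    (h : x - y ∈ Ideal.span {(p : ℤ_[p]) ^ k}) :
    f x - f y ∈ Ideal.span {(p : ℤ_[p]) ^ k} := by
  rw [← PadicInt.norm_le_pow_iff_mem_span_pow] at h ⊢
  exact le_trans (hf x y) h

theorem red_eq (hf : Compatible f) (x : ℤ_[p]) (k : ℕ) :
    (f x).appr k = red f k (x.appr k) := by
  apply appr_eq_of_sub_mem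
  exact compatible_sub_mem hf _ _ _ (PadicInt.appr_spec k x)

theorem red_lt (f : ℤ_[p] → ℤ_[p]) (k m : ℕ) : red f k m < p ^ k := PadicInt.appr_lt _ k
theorem digitN_natCast (M k : ℕ) : digitN ((M : ℤ_[p])) k = M / p ^ k % p := by
  unfold digitN
  rw [appr_natCast, pow_succ, Nat.mod_mul_right_div_self]

theorem iter_appr (hf : Compatible f) (k : ℕ) : ∀ (s : ℕ) (x : ℤ_[p]),
    (f^[s] x).appr k = (red f k)^[s] (x.appr k) := by
  intro s
  induction s with
  | zero => intro x; rfl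
  | succ s ih =>
    intro x
    rw [Function.iterate_succ_apply', Function.iterate_succ_apply', red_eq hf, ih]

theorem red_mod (hf : Compatible f) (k M : ℕ) :
    red f (k + 1) M % p ^ k = red f k (M % p ^ k) := by
  show (f (M : ℤ_[p])).appr (k+1) % p ^ k = (f ((M % p ^ k : ℕ) : ℤ_[p])).appr k
  rw [appr_mod, red_eq hf, appr_natCast]
  rfl

theorem red_div (hf : Compatible f) (hφ : CoordRep f φ) (k M : ℕ) :
    ((red f (k + 1) M / p ^ k : ℕ) : ZMod p)
      = φ k (M % p ^ k) (((M / p ^ k % p : ℕ)) : ZMod p) := by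
  have h1 : red f (k+1) M / p ^ k = digitN (f (M : ℤ_[p])) k := rfl
  rw [h1, ← digitN_natCast]
  have := hφ (M : ℤ_[p]) k
  unfold digit at this
  rw [this, appr_natCast]

theorem red_iter_mod (hf : Compatible f) (k : ℕ) : ∀ (s M : ℕ),
    (red f (k + 1))^[s] M % p ^ k = (red f k)^[s] (M % p ^ k) := by
  intro s
  induction s with
  | zero => intro M; rfl
  | succ s ih =>
    intro M
    rw [Function.iterate_succ_apply', Function.iterate_succ_apply', red_mod hf, ih]

theorem red_iter_lt (k : ℕ) : ∀ (s M : ℕ), M < p ^ (k + 1) →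
    (red f (k + 1))^[s] M < p ^ (k + 1) := by
  intro s M hM
  cases s with
  | zero => exact hM
  | succ s => rw [Function.iterate_succ_apply']; exact red_lt f _ _

theorem red_iter_div (hf : Compatible f) (hφ : CoordRep f φ) (k : ℕ) : ∀ (s M : ℕ),
    M < p ^ (k + 1) →
    (((red f (k + 1))^[s] M / p ^ k : ℕ) : ZMod p)
      = (compSeq (φ k) (red f k) (M % p ^ k) s) (((M / p ^ k : ℕ)) : ZMod p) := by
  intro s
  induction s with
  | zero => intro M hM; rfl
  | succ s ih =>
    intro M hM
    have hlt : (red f (k + 1))^[s] M < p ^ (k + 1) := red_iter_lt k s M hM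
    have hmod : (red f (k + 1))^[s] M / p ^ k % p = (red f (k + 1))^[s] M / p ^ k := by
      apply Nat.mod_eq_of_lt
      rw [pow_succ] at hlt
      exact Nat.div_lt_of_lt_mul (by omega)
    rw [Function.iterate_succ_apply', red_div hf hφ, hmod, ih M hM, red_iter_mod hf]
    rfl

theorem red_inj (hf : Compatible f) (hφ : CoordRep f φ)
    (hperm : ∀ k xb, xb < p ^ k → Function.Bijective (φ k xb)) :
    ∀ (k m₁ m₂ : ℕ), m₁ < p ^ k → m₂ < p ^ k → red f k m₁ = red f k m₂ → m₁ = m₂ := by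
  intro k
  induction k with
  | zero =>
    intro m₁ m₂ h1 h2 _
    simp only [pow_zero] at h1 h2
    omega
  | succ k ih =>
    intro m₁ m₂ h1 h2 heq
    have hmod : m₁ % p ^ k = m₂ % p ^ k := by
      apply ih _ _ (Nat.mod_lt _ (pk_pos k)) (Nat.mod_lt _ (pk_pos k))
      rw [← red_mod hf, ← red_mod hf, heq]
    have hdivlt1 : m₁ / p ^ k < p := by
      rw [pow_succ] at h1; exact Nat.div_lt_of_lt_mul (by omega)
    have hdivlt2 : m₂ / p ^ k < p := by
      rw [pow_succ] at h2; exact Nat.div_lt_of_lt_mul (by omega)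
    have e1 := red_div hf hφ (φ := φ) k m₁
    have e2 := red_div hf hφ (φ := φ) k m₂
    rw [← hmod] at e2
    have key : φ k (m₁ % p ^ k) ((m₁ / p ^ k % p : ℕ) : ZMod p)
        = φ k (m₁ % p ^ k) ((m₂ / p ^ k % p : ℕ) : ZMod p) := by
      rw [← e1, ← e2, heq]
    have hc := (hperm k (m₁ % p ^ k) (Nat.mod_lt _ (pk_pos k))).1 key
    rw [Nat.mod_eq_of_lt hdivlt1, Nat.mod_eq_of_lt hdivlt2] at hc
    haveI : NeZero p := ⟨hp.out.ne_zero⟩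
    have hdiv : m₁ / p ^ k = m₂ / p ^ k := by
      have := congrArg ZMod.val hc
      rwa [ZMod.val_cast_of_lt hdivlt1, ZMod.val_cast_of_lt hdivlt2] at this
    have d1 := Nat.div_add_mod m₁ (p ^ k)
    have d2 := Nat.div_add_mod m₂ (p ^ k)
    rw [hdiv] at d1
    omega
theorem iterate_add_apply' (g : ℕ → ℕ) (a b : ℕ) (x : ℕ) :
    g^[a + b] x = g^[b] (g^[a] x) := by
  rw [Nat.add_comm, Function.iterate_add_apply]

section Period

variable (g : ℕ → ℕ) (N : ℕ) (hN : 0 < N)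
  (hmap : ∀ m, m < N → g m < N)
  (hinj : ∀ m₁ m₂, m₁ < N → m₂ < N → g m₁ = g m₂ → m₁ = m₂)

include hN hmap in
theorem iter_lt_orbit : ∀ s x, x < N → g^[s] x < N := by
  intro s
  induction s with
  | zero => intro x hx; exact hx
  | succ s ih => intro x hx; rw [Function.iterate_succ_apply']; exact hmap _ (ih x hx)

include hN hmap hinj in
theorem iter_inj : ∀ s x y, x < N → y < N → g^[s] x = g^[s] y → x = y := by
  intro s
  induction s with
  | zero => intro x y _ _ h; exact h
  | succ s ih =>
    intro x y hx hy h
    rw [Function.iterate_succ_apply', Function.iterate_succ_apply'] at h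
    exact ih x y hx hy (hinj _ _ (iter_lt_orbit g N hN hmap s x hx)
      (iter_lt_orbit g N hN hmap s y hy) h)

include hN hmap hinj in
theorem period_exists (htr : TransitiveOn g N) :
    g^[N] 0 = 0 ∧ ∀ s, g^[s] 0 = 0 → N ∣ s := by
  have h0N : (0:ℕ) < N := hN
  have horb : ∀ s, g^[s] 0 < N := fun s => iter_lt_orbit g N hN hmap s 0 h0N
  -- pigeonhole: some positive t ≤ N with g^[t] 0 = 0
  have hpigeon : ∃ t, 0 < t ∧ t ≤ N ∧ g^[t] 0 = 0 := by
    have : ¬ Function.Injective (fun s : Fin (N+1) => (⟨g^[s.1] 0, horb s.1⟩ : Fin N)) := by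
      intro hinj2
      have := Fintype.card_le_of_injective _ hinj2
      simp at this
    rw [Function.not_injective_iff] at this
    obtain ⟨i, j, hij, hne⟩ := this
    simp only [Fin.mk.injEq] at hij
    rcases Nat.lt_or_ge i.1 j.1 with h | h
    · refine ⟨j.1 - i.1, by omega, by omega, ?_⟩
      apply iter_inj g N hN hmap hinj i.1 _ _ (horb _) h0N
      rw [← iterate_add_apply']
      rw [show j.1 - i.1 + i.1 = j.1 by omega, hij]
    · have hlt : j.1 < i.1 := by
        rcases Nat.lt_or_ge j.1 i.1 with h2 | h2
        · exact h2
        · exact absurd (Fin.ext (by omega)) hne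
      refine ⟨i.1 - j.1, by omega, by omega, ?_⟩
      apply iter_inj g N hN hmap hinj j.1 _ _ (horb _) h0N
      rw [← iterate_add_apply']
      rw [show i.1 - j.1 + j.1 = i.1 by omega, ← hij]
  -- minimal positive period
  obtain ⟨t0, ht01, ht02, ht03⟩ := hpigeon
  have hex : ∃ t, 0 < t ∧ g^[t] 0 = 0 := ⟨t0, ht01, ht03⟩
  set r := Nat.find hex with hr
  obtain ⟨hrpos, hrper⟩ := Nat.find_spec hex
  have hrleN : r ≤ N := le_trans (Nat.find_le ⟨ht01, ht03⟩) ht02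
  have hmul : ∀ q, g^[q * r] 0 = 0 := by
    intro q
    induction q with
    | zero => rw [Nat.zero_mul]; rfl
    | succ q ih => rw [Nat.succ_mul, iterate_add_apply', ih, hrper]
  have hper : ∀ s, g^[s] 0 = g^[s % r] 0 := by
    intro s
    conv_lhs => rw [← Nat.div_add_mod s r]
    rw [iterate_add_apply', Nat.mul_comm r (s / r), hmul]
  have hNler : N ≤ r := by
    have hsub : Finset.range N ⊆ (Finset.range r).image (fun s => g^[s] 0) := by
      intro b hb
      rw [Finset.mem_range] at hb
      obtain ⟨s, hs⟩ := htr 0 h0N b hb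
      rw [Finset.mem_image]
      exact ⟨s % r, Finset.mem_range.mpr (Nat.mod_lt _ hrpos), by rw [← hper, hs]⟩
    calc N = (Finset.range N).card := (Finset.card_range N).symm
      _ ≤ _ := Finset.card_le_card hsub
      _ ≤ (Finset.range r).card := Finset.card_image_le
      _ = r := Finset.card_range r
  have hrN : r = N := le_antisymm hrleN hNler
  constructor
  · rw [← hrN]; exact hrper
  · intro s hs
    rw [hper] at hs
    by_cases h : s % r = 0
    · rw [← hrN]; exact Nat.dvd_of_mod_eq_zero h
    · exact absurd hs (by
        have := Nat.find_min hex (m := s % r) (Nat.mod_lt _ hrpos)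
        intro hcon
        exact this ⟨Nat.pos_of_ne_zero h, hcon⟩)

end Period

theorem compSeq_add (ψ : ℕ → ZMod p → ZMod p) (g : ℕ → ℕ) (xb : ℕ) (s t : ℕ) :
    compSeq ψ g xb (s + t) = compSeq ψ g (g^[s] xb) t ∘ compSeq ψ g xb s := by
  induction t with
  | zero => rfl
  | succ t ih =>
    show compSeq ψ g xb (s + t + 1) = _
    show ψ (g^[s + t] xb) ∘ compSeq ψ g xb (s + t) = _
    rw [ih, iterate_add_apply']
    rfl

theorem compSeq_mul (ψ : ℕ → ZMod p → ZMod p) (g : ℕ → ℕ) (N : ℕ) (hper : g^[N] 0 = 0)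
    (u : ℕ) : compSeq ψ g 0 (u * N) = (compSeq ψ g 0 N)^[u] := by
  induction u with
  | zero => rw [Nat.zero_mul]; rfl
  | succ u ih =>
    have hmulper : g^[u * N] 0 = 0 := by
      clear ih
      induction u with
      | zero => rw [Nat.zero_mul]; rfl
      | succ u ih2 => rw [Nat.succ_mul, iterate_add_apply', ih2, hper]
    rw [Nat.succ_mul, compSeq_add, hmulper, ih, Function.iterate_succ']

theorem compSeq_bij (hperm : ∀ k xb, xb < p ^ k → Function.Bijective (φ k xb))
    (k : ℕ) (m : ℕ) (hm : m < p ^ k) (s : ℕ) :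
    Function.Bijective (compSeq (φ k) (red f k) m s) := by
  induction s with
  | zero => exact Function.bijective_id
  | succ s ih =>
    have harg : (red f k)^[s] m < p ^ k := by
      cases s with
      | zero => exact hm
      | succ s => rw [Function.iterate_succ_apply']; exact red_lt f _ _
    exact (hperm k _ harg).comp ih
theorem nat_eq_helper (k X Y : ℕ) (hX : X < p ^ (k+1)) (hY : Y < p ^ (k+1))
    (hmod : X % p ^ k = Y % p ^ k)
    (hdiv : ((X / p ^ k : ℕ) : ZMod p) = ((Y / p ^ k : ℕ) : ZMod p)) : X = Y := by
  haveI : NeZero p := ⟨hp.out.ne_zero⟩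
  have h1 : X / p ^ k < p := by rw [pow_succ] at hX; exact Nat.div_lt_of_lt_mul (by omega)
  have h2 : Y / p ^ k < p := by rw [pow_succ] at hY; exact Nat.div_lt_of_lt_mul (by omega)
  have h3 := congrArg ZMod.val hdiv
  rw [ZMod.val_cast_of_lt h1, ZMod.val_cast_of_lt h2] at h3
  have d1 := Nat.div_add_mod X (p ^ k)
  have d2 := Nat.div_add_mod Y (p ^ k)
  rw [h3] at d1
  omega

theorem step_iff (hf : Compatible f) (hφ : CoordRep f φ)
    (hperm : ∀ k xb, xb < p ^ k → Function.Bijective (φ k xb)) (k : ℕ) :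
    TransitiveOn (red f (k+1)) (p^(k+1)) ↔
      (TransitiveOn (red f k) (p^k) ∧ IsTransitive (Fperm φ f k 0)) := by
  haveI : NeZero p := ⟨hp.out.ne_zero⟩
  have hple : p ^ k ≤ p ^ (k+1) := Nat.pow_le_pow_right hp.out.pos (Nat.le_succ k)
  constructor
  · intro htr
    have hbase : TransitiveOn (red f k) (p^k) := by
      intro a ha b hb
      obtain ⟨s, hs⟩ := htr a (lt_of_lt_of_le ha hple) b (lt_of_lt_of_le hb hple)
      refine ⟨s, ?_⟩
      have h5 := red_iter_mod hf k s a
      rw [hs, Nat.mod_eq_of_lt ha] at h5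
      rw [← h5, Nat.mod_eq_of_lt hb]
    refine ⟨hbase, ?_⟩
    obtain ⟨hperiod, hdvd⟩ := period_exists (red f k) (p^k) (pk_pos k)
      (fun m _ => red_lt f k m) (fun m₁ m₂ h1 h2 h3 => red_inj hf hφ hperm k m₁ m₂ h1 h2 h3) hbase
    intro da db
    have hAlt : p ^ k * da.val < p ^ (k+1) := by
      rw [pow_succ]; exact (mul_lt_mul_iff_right₀ (pk_pos k)).mpr (ZMod.val_lt da)
    have hBlt : p ^ k * db.val < p ^ (k+1) := by
      rw [pow_succ]; exact (mul_lt_mul_iff_right₀ (pk_pos k)).mpr (ZMod.val_lt db)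
    obtain ⟨s, hs⟩ := htr _ hAlt _ hBlt
    have hmodA : p ^ k * da.val % p ^ k = 0 := Nat.mul_mod_right _ _
    have hmodB : p ^ k * db.val % p ^ k = 0 := Nat.mul_mod_right _ _
    have hdivA : p ^ k * da.val / p ^ k = da.val := Nat.mul_div_cancel_left _ (pk_pos k)
    have hdivB : p ^ k * db.val / p ^ k = db.val := Nat.mul_div_cancel_left _ (pk_pos k)
    have hbase0 : (red f k)^[s] 0 = 0 := by
      have h6 := red_iter_mod hf k s (p ^ k * da.val)
      rw [hs, hmodA, hmodB] at h6
      exact h6.symm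
    obtain ⟨u, hu⟩ := hdvd s hbase0
    have hdig := red_iter_div hf hφ k s (p ^ k * da.val) hAlt
    rw [hs, hmodA, hdivA, hdivB] at hdig
    rw [ZMod.natCast_rightInverse da, ZMod.natCast_rightInverse db] at hdig
    refine ⟨u, ?_⟩
    show (Fperm φ f k 0)^[u] da = db
    unfold Fperm
    rw [← compSeq_mul (φ k) (red f k) (p^k) hperiod u, Nat.mul_comm u (p ^ k), ← hu]
    exact hdig.symm
  · rintro ⟨hbase, hF⟩
    obtain ⟨hperiod, _⟩ := period_exists (red f k) (p^k) (pk_pos k)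
      (fun m _ => red_lt f k m) (fun m₁ m₂ h1 h2 h3 => red_inj hf hφ hperm k m₁ m₂ h1 h2 h3) hbase
    have hmul0 : ∀ u, (red f k)^[u * p ^ k] 0 = 0 := by
      intro u
      induction u with
      | zero => rw [Nat.zero_mul]; rfl
      | succ u ih => rw [Nat.succ_mul, iterate_add_apply', ih, hperiod]
    intro A hA B hB
    have haN : A % p ^ k < p ^ k := Nat.mod_lt _ (pk_pos k)
    have hbN : B % p ^ k < p ^ k := Nat.mod_lt _ (pk_pos k)
    obtain ⟨s₁, hs₁⟩ := hbase (A % p ^ k) haN 0 (pk_pos k)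
    obtain ⟨t, ht⟩ := hbase 0 (pk_pos k) (B % p ^ k) hbN
    obtain ⟨c, hc⟩ := (compSeq_bij (f := f) hperm k 0 (pk_pos k) t).2 ((B / p ^ k : ℕ) : ZMod p)
    obtain ⟨u, hu⟩ := hF (compSeq (φ k) (red f k) (A % p ^ k) s₁ ((A / p ^ k : ℕ) : ZMod p)) c
    unfold Fperm at hu
    refine ⟨s₁ + u * p ^ k + t, ?_⟩
    apply nat_eq_helper k _ _ (red_iter_lt k _ A hA) hB
    · rw [red_iter_mod hf k]
      rw [iterate_add_apply', iterate_add_apply', hs₁, hmul0, ht]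
    · rw [red_iter_div hf hφ k _ A hA]
      rw [compSeq_add, compSeq_add, Function.comp_apply, Function.comp_apply,
        iterate_add_apply', hs₁, hmul0,
        compSeq_mul (φ k) (red f k) (p^k) hperiod u, hu, hc]

theorem trans_zero : TransitiveOn (red f 0) (p ^ 0) := by
  intro a ha b hb
  simp only [pow_zero] at ha hb
  refine ⟨0, ?_⟩
  simp only [Function.iterate_zero_apply]
  omega

theorem Fperm_zero : Fperm φ f 0 0 = φ 0 0 := by
  unfold Fperm
  rw [pow_zero]
  show φ 0 ((red f 0)^[0] 0) ∘ compSeq (φ 0) (red f 0) 0 0 = φ 0 0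
  rfl

theorem all_trans_iff (hf : Compatible f) (hφ : CoordRep f φ)
    (hperm : ∀ k xb, xb < p ^ k → Function.Bijective (φ k xb)) :
    (∀ k, TransitiveOn (red f k) (p ^ k)) ↔
      (IsTransitive (φ 0 0) ∧ ∀ k, 1 ≤ k → IsTransitive (Fperm φ f k 0)) := by
  have key : (∀ k, TransitiveOn (red f k) (p ^ k)) ↔ ∀ k, IsTransitive (Fperm φ f k 0) := by
    constructor
    · intro h k
      exact ((step_iff hf hφ hperm k).mp (h (k+1))).2
    · intro h k
      induction k with
      | zero => exact trans_zero
      | succ k ih => exact (step_iff hf hφ hperm k).mpr ⟨ih, h k⟩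
  rw [key]
  constructor
  · intro h
    have h0 := h 0
    rw [Fperm_zero] at h0
    exact ⟨h0, fun k _ => h k⟩
  · rintro ⟨h0, h1⟩ k
    cases k with
    | zero => rw [Fperm_zero]; exact h0
    | succ k => exact h1 (k+1) (by omega)
noncomputable def cell (k : ℕ) (j : ZMod (p ^ k)) : Set ℤ_[p] :=
  (PadicInt.toZModPow k) ⁻¹' {j}

theorem toZModPow_def (k : ℕ) (x : ℤ_[p]) :
    PadicInt.toZModPow k x = ((x.appr k : ℕ) : ZMod (p ^ k)) := rfl

instance : IsProbabilityMeasure (μp p) := by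
  constructor
  unfold μp
  rw [← TopologicalSpace.PositiveCompacts.coe_top (α := ℤ_[p])]
  exact MeasureTheory.Measure.addHaarMeasure_self

theorem lipschitz_of_compatible (hf : Compatible f) : LipschitzWith 1 f := by
  apply LipschitzWith.of_dist_le_mul
  intro x y
  rw [dist_eq_norm, dist_eq_norm]
  simpa using hf x y

theorem measurable_of_compatible (hf : Compatible f) : Measurable f :=
  (lipschitz_of_compatible hf).continuous.measurable

theorem toZModPow_eq_of_sub_mem (k : ℕ) (x y : ℤ_[p])
    (h : x - y ∈ Ideal.span {(p : ℤ_[p]) ^ k}) :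
    PadicInt.toZModPow k x = PadicInt.toZModPow k y := by
  have h2 : PadicInt.toZModPow k (x - y) = 0 := by
    rw [← RingHom.mem_ker, PadicInt.ker_toZModPow]
    exact h
  rw [map_sub, sub_eq_zero] at h2
  exact h2

theorem sub_mem_of_toZModPow_eq (k : ℕ) (x y : ℤ_[p])
    (h : PadicInt.toZModPow k x = PadicInt.toZModPow k y) :
    x - y ∈ Ideal.span {(p : ℤ_[p]) ^ k} := by
  rw [← PadicInt.ker_toZModPow, RingHom.mem_ker, map_sub, sub_eq_zero]
  exact h

theorem cell_isOpen (k : ℕ) (j : ZMod (p ^ k)) : IsOpen (cell k j) := by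
  rw [Metric.isOpen_iff]
  intro x hx
  have hp0 : (0:ℝ) < p := by exact_mod_cast hp.out.pos
  refine ⟨(p : ℝ) ^ (-(k:ℤ)), by positivity, ?_⟩
  intro y hy
  simp only [Metric.mem_ball, dist_eq_norm] at hy
  have : PadicInt.toZModPow k y = PadicInt.toZModPow k x := by
    apply toZModPow_eq_of_sub_mem
    rw [← PadicInt.norm_le_pow_iff_mem_span_pow]
    exact le_of_lt hy
  simp only [cell, Set.mem_preimage, Set.mem_singleton_iff] at hx ⊢
  rw [this, hx]

theorem cell_measurable (k : ℕ) (j : ZMod (p ^ k)) : MeasurableSet (cell k j) :=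
  (cell_isOpen k j).measurableSet

theorem mem_cell_iff (k : ℕ) (j : ZMod (p ^ k)) (x : ℤ_[p]) :
    x ∈ cell k j ↔ PadicInt.toZModPow k x = j := Iff.rfl

theorem cell_norm_le (k : ℕ) (j : ZMod (p ^ k)) (x y : ℤ_[p]) (hx : x ∈ cell k j)
    (hy : y ∈ cell k j) : ‖x - y‖ ≤ (p : ℝ) ^ (-(k:ℤ)) := by
  rw [PadicInt.norm_le_pow_iff_mem_span_pow]
  apply sub_mem_of_toZModPow_eq
  rw [(mem_cell_iff k j x).mp hx, (mem_cell_iff k j y).mp hy]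
open scoped ENNReal in
theorem dummy_ennreal_open : (1 : ℝ≥0∞) = 1 := rfl

open scoped ENNReal

theorem cell_cover (k : ℕ) : (⋃ j : ZMod (p ^ k), cell k j) = Set.univ := by
  ext x
  simp only [Set.mem_iUnion, Set.mem_univ, iff_true]
  exact ⟨PadicInt.toZModPow (p := p) k x, rfl⟩

theorem cell_disjoint (k : ℕ) : Pairwise (Function.onFun Disjoint (cell (p := p) k)) := by
  intro i j hij
  rw [Function.onFun, Set.disjoint_left]
  intro x hxi hxj
  exact hij ((mem_cell_iff k i x).mp hxi ▸ (mem_cell_iff k j x).mp hxj)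

theorem cell_preimage_add (k : ℕ) (j : ZMod (p ^ k)) :
    (fun x : ℤ_[p] => (-(j.val : ℤ_[p])) + x) ⁻¹' (cell k 0) = cell k j := by
  haveI : NeZero (p ^ k) := ⟨Nat.pos_iff_ne_zero.mp (pk_pos (p := p) k)⟩
  ext x
  simp only [Set.mem_preimage, mem_cell_iff, map_add, map_neg, map_natCast]
  rw [ZMod.natCast_val, ZMod.cast_id]
  rw [neg_add_eq_zero]
  exact eq_comm

instance : (μp p).IsAddLeftInvariant := by
  unfold μp; infer_instance

theorem cell_measure (k : ℕ) (j : ZMod (p ^ k)) :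
    μp p (cell k j) = ((p : ℝ≥0∞) ^ k)⁻¹ := by
  haveI : NeZero (p ^ k) := ⟨Nat.pos_iff_ne_zero.mp (pk_pos (p := p) k)⟩
  have hinv : ∀ i : ZMod (p ^ k), μp p (cell k i) = μp p (cell k 0) := by
    intro i
    rw [← cell_preimage_add k i]
    exact measure_preimage_add (μp p) _ _
  have hsum : μp p Set.univ = ∑ i : ZMod (p ^ k), μp p (cell k i) := by
    rw [← cell_cover k, measure_iUnion (cell_disjoint k) (cell_measurable k), tsum_fintype]
  rw [measure_univ] at hsum
  have hcard : (Finset.univ : Finset (ZMod (p ^ k))).card = p ^ k := by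
    rw [Finset.card_univ, ZMod.card]
  have hsum2 : (1 : ℝ≥0∞) = (p ^ k : ℕ) * μp p (cell k 0) := by
    rw [hsum, Finset.sum_congr rfl (fun i _ => hinv i), Finset.sum_const, hcard, nsmul_eq_mul]
  have hpk0 : ((p ^ k : ℕ) : ℝ≥0∞) ≠ 0 :=
    Nat.cast_ne_zero.mpr (Nat.pos_iff_ne_zero.mp (pk_pos (p := p) k))
  have hpktop : ((p ^ k : ℕ) : ℝ≥0∞) ≠ ⊤ := ENNReal.natCast_ne_top _
  have h7 : ((p ^ k : ℕ) : ℝ≥0∞)⁻¹ * 1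
      = ((p ^ k : ℕ) : ℝ≥0∞)⁻¹ * (((p ^ k : ℕ) : ℝ≥0∞) * μp p (cell k 0)) := by
    rw [← hsum2]
  rw [mul_one, ← mul_assoc, ENNReal.inv_mul_cancel hpk0 hpktop, one_mul] at h7
  rw [hinv j, ← h7, Nat.cast_pow]
def cellSet (p : ℕ) [Fact p.Prime] : Set (Set ℤ_[p]) :=
  {S | ∃ (k : ℕ) (j : ZMod (p ^ k)), S = cell k j}

theorem cell_subset_of_le (k l : ℕ) (hkl : k ≤ l) (j : ZMod (p ^ k)) (i : ZMod (p ^ l))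
    (hne : (cell k j ∩ cell l i).Nonempty) : cell l i ⊆ cell k j := by
  obtain ⟨x, hxj, hxi⟩ := hne
  intro y hy
  rw [mem_cell_iff] at hy hxi hxj ⊢
  have hsub : y - x ∈ Ideal.span {(p : ℤ_[p]) ^ k} := by
    have h1 : y - x ∈ Ideal.span {(p : ℤ_[p]) ^ l} := by
      apply sub_mem_of_toZModPow_eq; rw [hy, hxi]
    rw [Ideal.mem_span_singleton] at h1 ⊢
    exact dvd_trans (pow_dvd_pow _ hkl) h1
  rw [toZModPow_eq_of_sub_mem k y x hsub, hxj]

theorem cellSet_pi : IsPiSystem (cellSet p) := by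
  rintro s ⟨k, j, rfl⟩ t ⟨l, i, rfl⟩ hne
  rcases Nat.le_or_le k l with h | h
  · rw [Set.inter_eq_right.mpr (cell_subset_of_le k l h j i hne)]
    exact ⟨l, i, rfl⟩
  · rw [Set.inter_comm] at hne ⊢
    rw [Set.inter_eq_right.mpr (cell_subset_of_le l k h i j hne)]
    exact ⟨k, j, rfl⟩

theorem isOpen_measurable_gen (U : Set ℤ_[p]) (hU : IsOpen U) :
    MeasurableSet[MeasurableSpace.generateFrom (cellSet p)] U := by
  have hrep : U = ⋃ k : ℕ, ⋃ j : ZMod (p ^ k), ⋃ (_ : cell k j ⊆ U), cell k j := by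
    apply Set.Subset.antisymm
    · intro x hx
      obtain ⟨ε, hε, hball⟩ := Metric.isOpen_iff.mp hU x hx
      obtain ⟨k, hk⟩ := PadicInt.exists_pow_neg_lt p hε
      have hsub : cell k (PadicInt.toZModPow k x) ⊆ U := by
        intro y hy
        apply hball
        rw [Metric.mem_ball, dist_eq_norm]
        exact lt_of_le_of_lt (cell_norm_le k _ y x hy rfl) hk
      exact Set.mem_iUnion.mpr ⟨k, Set.mem_iUnion.mpr ⟨PadicInt.toZModPow k x,
        Set.mem_iUnion.mpr ⟨hsub, rfl⟩⟩⟩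
    · apply Set.iUnion_subset; intro k
      apply Set.iUnion_subset; intro j
      exact Set.iUnion_subset fun h => h
  rw [hrep]
  apply MeasurableSet.iUnion; intro k
  apply MeasurableSet.iUnion; intro j
  apply MeasurableSet.iUnion; intro _
  exact MeasurableSpace.measurableSet_generateFrom ⟨k, j, rfl⟩

theorem mspace_eq :
    (inferInstance : MeasurableSpace ℤ_[p]) = MeasurableSpace.generateFrom (cellSet p) := by
  apply le_antisymm
  · show MeasurableSpace.generateFrom {s : Set ℤ_[p] | IsOpen s} ≤ _
    apply MeasurableSpace.generateFrom_le
    intro U hU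
    exact isOpen_measurable_gen U hU
  · apply MeasurableSpace.generateFrom_le
    rintro S ⟨k, j, rfl⟩
    exact cell_measurable k j

noncomputable def gbar (f : ℤ_[p] → ℤ_[p]) (k : ℕ) : ZMod (p ^ k) → ZMod (p ^ k) :=
  fun j => PadicInt.toZModPow k (f ((j.val : ℕ) : ℤ_[p]))

theorem gbar_spec (hf : Compatible f) (k : ℕ) (x : ℤ_[p]) :
    PadicInt.toZModPow k (f x) = gbar f k (PadicInt.toZModPow k x) := by
  haveI : NeZero (p ^ k) := ⟨Nat.pos_iff_ne_zero.mp (pk_pos (p := p) k)⟩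
  have hval : (PadicInt.toZModPow k x).val = x.appr k := by
    rw [toZModPow_def, ZMod.val_cast_of_lt (PadicInt.appr_lt x k)]
  unfold gbar
  rw [hval]
  apply toZModPow_eq_of_sub_mem
  exact compatible_sub_mem hf _ _ _ (PadicInt.appr_spec k x)

theorem red_mod_self (hf : Compatible f) (k m : ℕ) : red f k (m % p ^ k) = red f k m := by
  unfold red
  apply appr_eq_of_sub_mem
  apply compatible_sub_mem hf
  have : ((m % p ^ k : ℕ) : ℤ_[p]) - (m : ℤ_[p]) = -(((p ^ k * (m / p ^ k) : ℕ)) : ℤ_[p]) := by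
    have h1 : m = m % p ^ k + p ^ k * (m / p ^ k) := by
      have := Nat.div_add_mod m (p ^ k); omega
    rw [show ((m:ℤ_[p]) = ((m % p ^ k + p ^ k * (m / p ^ k) : ℕ) : ℤ_[p])) from by rw [← h1]]
    push_cast
    ring
  rw [this]
  apply neg_mem
  rw [Ideal.mem_span_singleton]
  push_cast
  exact Dvd.intro _ rfl

theorem gbar_natCast (hf : Compatible f) (k m : ℕ) :
    gbar f k ((m : ZMod (p ^ k))) = ((red f k m : ℕ) : ZMod (p ^ k)) := by
  unfold gbar
  rw [ZMod.val_natCast, toZModPow_def]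
  show ((red f k (m % p ^ k) : ℕ) : ZMod (p ^ k)) = _
  rw [red_mod_self hf]

theorem gbar_bij (hf : Compatible f) (hφ : CoordRep f φ)
    (hperm : ∀ k xb, xb < p ^ k → Function.Bijective (φ k xb)) (k : ℕ) :
    Function.Bijective (gbar f k) := by
  haveI : NeZero (p ^ k) := ⟨Nat.pos_iff_ne_zero.mp (pk_pos (p := p) k)⟩
  rw [Finite.injective_iff_bijective.symm]
  intro j₁ j₂ h
  have h1 : gbar f k ((j₁.val : ZMod (p ^ k))) = gbar f k ((j₂.val : ZMod (p ^ k))) := by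
    rwa [ZMod.natCast_val, ZMod.cast_id, ZMod.natCast_val, ZMod.cast_id]
  rw [gbar_natCast hf, gbar_natCast hf] at h1
  have h2 : red f k j₁.val = red f k j₂.val := by
    have := congrArg ZMod.val h1
    rwa [ZMod.val_cast_of_lt (red_lt f k _), ZMod.val_cast_of_lt (red_lt f k _)] at this
  have h3 := red_inj hf hφ hperm k j₁.val j₂.val (ZMod.val_lt j₁) (ZMod.val_lt j₂) h2
  exact ZMod.val_injective _ h3
theorem preimage_cell (hf : Compatible f) (hφ : CoordRep f φ)
    (hperm : ∀ k xb, xb < p ^ k → Function.Bijective (φ k xb)) (k : ℕ) (j : ZMod (p ^ k)) :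
    f ⁻¹' cell k j = cell k ((Equiv.ofBijective _ (gbar_bij hf hφ hperm k)).symm j) := by
  ext x
  simp only [Set.mem_preimage, mem_cell_iff]
  rw [gbar_spec hf k x]
  rw [← Equiv.ofBijective_apply _ (gbar_bij hf hφ hperm k), ← Equiv.eq_symm_apply]

theorem mp_f (hf : Compatible f) (hφ : CoordRep f φ)
    (hperm : ∀ k xb, xb < p ^ k → Function.Bijective (φ k xb)) :
    MeasurePreserving f (μp p) (μp p) := by
  have hm := measurable_of_compatible hf
  refine ⟨hm, ?_⟩
  haveI : IsProbabilityMeasure ((μp p).map f) := Measure.isProbabilityMeasure_map hm.aemeasurable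
  apply MeasureTheory.ext_of_generate_finite (cellSet p) mspace_eq cellSet_pi
  · rintro S ⟨k, j, rfl⟩
    rw [Measure.map_apply hm (cell_measurable k j), preimage_cell hf hφ hperm k j,
      cell_measure, cell_measure]
  · simp

theorem gbar_iter_natCast (hf : Compatible f) (k : ℕ) : ∀ (t m : ℕ),
    (gbar f k)^[t] ((m : ZMod (p ^ k))) = (((red f k)^[t] m : ℕ) : ZMod (p ^ k)) := by
  intro t
  induction t with
  | zero => intro m; rfl
  | succ t ih =>
    intro m
    rw [Function.iterate_succ_apply', Function.iterate_succ_apply', ih, gbar_natCast hf]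

theorem gbar_trans (hf : Compatible f) (k : ℕ) (htr : TransitiveOn (red f k) (p ^ k)) :
    ∀ i j : ZMod (p ^ k), ∃ t, (gbar f k)^[t] i = j := by
  haveI : NeZero (p ^ k) := ⟨Nat.pos_iff_ne_zero.mp (pk_pos (p := p) k)⟩
  intro i j
  obtain ⟨t, ht⟩ := htr i.val (ZMod.val_lt i) j.val (ZMod.val_lt j)
  refine ⟨t, ?_⟩
  have h1 : (gbar f k)^[t] ((i.val : ZMod (p ^ k))) = (((red f k)^[t] i.val : ℕ) : ZMod (p ^ k)) :=
    gbar_iter_natCast hf k t i.val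
  rwa [ZMod.natCast_val, ZMod.cast_id, ht, ZMod.natCast_val, ZMod.cast_id] at h1

theorem ergodic_of_trans (hf : Compatible f) (hφ : CoordRep f φ)
    (hperm : ∀ k xb, xb < p ^ k → Function.Bijective (φ k xb))
    (htr : ∀ k, TransitiveOn (red f k) (p ^ k)) : Ergodic f (μp p) := by
  refine ⟨mp_f hf hφ hperm, ?_⟩
  constructor
  intro s hs hfs
  rw [Filter.eventuallyConst_set']
  -- main claim: μ s = μ s * μ s
  have claim : ∀ (k : ℕ) (j : ZMod (p ^ k)),
      μp p (s ∩ cell k j) = μp p s * ((p : ℝ≥0∞) ^ k)⁻¹ := by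
    intro k
    haveI : NeZero (p ^ k) := ⟨Nat.pos_iff_ne_zero.mp (pk_pos (p := p) k)⟩
    set E := Equiv.ofBijective _ (gbar_bij hf hφ hperm k) with hE
    have step1 : ∀ j, μp p (s ∩ cell k (E.symm j)) = μp p (s ∩ cell k j) := by
      intro j
      have hpre : f ⁻¹' (s ∩ cell k j) = s ∩ cell k (E.symm j) := by
        rw [Set.preimage_inter, hfs, preimage_cell hf hφ hperm k j]
      rw [← hpre]
      exact (mp_f hf hφ hperm).measure_preimage
        ((hs.inter (cell_measurable k j)).nullMeasurableSet)
    have step2 : ∀ j, μp p (s ∩ cell k (gbar f k j)) = μp p (s ∩ cell k j) := by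
      intro j
      have h9 := step1 (E j)
      rw [Equiv.symm_apply_apply] at h9
      have h8 : E j = gbar f k j := rfl
      rw [h8] at h9
      exact h9.symm
    have step3 : ∀ (t : ℕ) (j), μp p (s ∩ cell k ((gbar f k)^[t] j)) = μp p (s ∩ cell k j) := by
      intro t
      induction t with
      | zero => intro j; rfl
      | succ t ih =>
        intro j
        rw [Function.iterate_succ_apply', step2, ih]
    have step4 : ∀ j, μp p (s ∩ cell k j) = μp p (s ∩ cell k 0) := by
      intro j
      obtain ⟨t, ht⟩ := gbar_trans hf k (htr k) 0 j
      rw [← ht, step3]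
    have step5 : μp p s = (p ^ k : ℕ) * μp p (s ∩ cell k 0) := by
      have hcover : s = ⋃ j : ZMod (p ^ k), s ∩ cell k j := by
        rw [← Set.inter_iUnion, cell_cover k, Set.inter_univ]
      have hdis : Pairwise (Function.onFun Disjoint (fun j => s ∩ cell k j)) := by
        intro i j hij
        exact Disjoint.mono Set.inter_subset_right Set.inter_subset_right (cell_disjoint k hij)
      conv_lhs => rw [hcover]
      rw [measure_iUnion hdis (fun j => hs.inter (cell_measurable k j)), tsum_fintype,
        Finset.sum_congr rfl (fun j _ => step4 j), Finset.sum_const, Finset.card_univ, ZMod.card,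
        nsmul_eq_mul]
    intro j
    have hpk0 : ((p ^ k : ℕ) : ℝ≥0∞) ≠ 0 :=
      Nat.cast_ne_zero.mpr (Nat.pos_iff_ne_zero.mp (pk_pos (p := p) k))
    have hpktop : ((p ^ k : ℕ) : ℝ≥0∞) ≠ ⊤ := ENNReal.natCast_ne_top _
    rw [step4 j]
    have h7 : ((p ^ k : ℕ) : ℝ≥0∞)⁻¹ * μp p s
        = ((p ^ k : ℕ) : ℝ≥0∞)⁻¹ * (((p ^ k : ℕ) : ℝ≥0∞) * μp p (s ∩ cell k 0)) := by
      rw [← step5]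
    rw [← mul_assoc, ENNReal.inv_mul_cancel hpk0 hpktop, one_mul] at h7
    rw [← h7, mul_comm, Nat.cast_pow]
  -- restrict measure equals scaled measure
  have hresteq : (μp p).restrict s = μp p s • μp p := by
    haveI : IsFiniteMeasure (μp p s • μp p) := by
      constructor
      simp only [Measure.smul_apply, smul_eq_mul, measure_univ, mul_one]
      exact lt_of_le_of_lt prob_le_one (by norm_num)
    apply MeasureTheory.ext_of_generate_finite (cellSet p) mspace_eq cellSet_pi
    · rintro S ⟨k, j, rfl⟩
      rw [Measure.restrict_apply (cell_measurable k j), Set.inter_comm, claim k j,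
        Measure.smul_apply, smul_eq_mul, cell_measure]
    · rw [Measure.restrict_apply_univ, Measure.smul_apply, smul_eq_mul, measure_univ, mul_one]
  have hss : μp p s = μp p s * μp p s := by
    have := congrArg (fun m : Measure ℤ_[p] => m s) hresteq
    simpa [Measure.restrict_apply_self, Measure.smul_apply, smul_eq_mul] using this
  rcases eq_or_ne (μp p s) 0 with h0 | h0
  · left
    exact MeasureTheory.ae_eq_empty.mpr h0
  · right
    rw [MeasureTheory.ae_eq_univ, prob_compl_eq_zero_iff hs]
    have htop : μp p s ≠ ⊤ := measure_ne_top _ _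
    have h10 := (ENNReal.mul_right_inj h0 htop).mp (show μp p s * 1 = μp p s * μp p s by
      rw [mul_one]; exact hss)
    exact h10.symm
theorem trans_of_ergodic (hf : Compatible f) (hφ : CoordRep f φ)
    (hperm : ∀ k xb, xb < p ^ k → Function.Bijective (φ k xb))
    (he : Ergodic f (μp p)) : ∀ k, TransitiveOn (red f k) (p ^ k) := by
  intro k
  by_contra hnt
  unfold TransitiveOn at hnt
  push_neg at hnt
  obtain ⟨a, ha, b, hb, hab⟩ := hnt
  haveI : NeZero (p ^ k) := ⟨Nat.pos_iff_ne_zero.mp (pk_pos (p := p) k)⟩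
  classical
  set O : Finset (ZMod (p ^ k)) :=
    Finset.univ.filter (fun j => ∃ t, (gbar f k)^[t] ((a : ZMod (p ^ k))) = j) with hO
  have haO : (a : ZMod (p ^ k)) ∈ O := Finset.mem_filter.mpr ⟨Finset.mem_univ _, ⟨0, rfl⟩⟩
  have hbO : ((b : ℕ) : ZMod (p ^ k)) ∉ O := by
    intro hmem
    obtain ⟨t, ht⟩ := (Finset.mem_filter.mp hmem).2
    rw [gbar_iter_natCast hf k t a] at ht
    have hlt : (red f k)^[t] a < p ^ k := by
      cases t with
      | zero => exact ha
      | succ t => rw [Function.iterate_succ_apply']; exact red_lt f _ _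
    have h2 := congrArg ZMod.val ht
    rw [ZMod.val_cast_of_lt hlt, ZMod.val_cast_of_lt hb] at h2
    exact hab t h2
  have hclosed : ∀ i, i ∈ O → gbar f k i ∈ O := by
    intro i hi
    obtain ⟨t, ht⟩ := (Finset.mem_filter.mp hi).2
    exact Finset.mem_filter.mpr ⟨Finset.mem_univ _,
      ⟨t + 1, by rw [Function.iterate_succ_apply', ht]⟩⟩
  have himg : Finset.image (gbar f k) O = O := by
    apply Finset.eq_of_subset_of_card_le
    · intro j hj
      obtain ⟨i, hi, rfl⟩ := Finset.mem_image.mp hj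
      exact hclosed i hi
    · rw [Finset.card_image_of_injective O (gbar_bij hf hφ hperm k).1]
  have hiff : ∀ i, gbar f k i ∈ O ↔ i ∈ O := by
    intro i
    constructor
    · intro hmem
      rw [← himg] at hmem
      obtain ⟨i', hi', he'⟩ := Finset.mem_image.mp hmem
      rwa [← (gbar_bij hf hφ hperm k).1 he']
    · exact hclosed i
  set S : Set ℤ_[p] := ⋃ j ∈ O, cell k j with hS
  have hmemS : ∀ x : ℤ_[p], x ∈ S ↔ PadicInt.toZModPow k x ∈ O := by
    intro x
    simp only [hS, Set.mem_iUnion]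
    constructor
    · rintro ⟨j, hj, hcell⟩
      rw [(mem_cell_iff k j x).mp hcell]
      exact hj
    · intro h
      exact ⟨_, h, rfl⟩
  have hSmeas : MeasurableSet S :=
    MeasurableSet.biUnion (Finset.countable_toSet O) (fun j _ => cell_measurable k j)
  have hSinv : f ⁻¹' S = S := by
    ext x
    rw [Set.mem_preimage, hmemS, hmemS, gbar_spec hf k x, hiff]
  have hmeasS : μp p S = O.card * ((p : ℝ≥0∞) ^ k)⁻¹ := by
    rw [hS, measure_biUnion_finset (fun i _ j _ hij => cell_disjoint k hij)
      (fun j _ => cell_measurable k j)]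
    rw [Finset.sum_congr rfl (fun j _ => cell_measure k j), Finset.sum_const, nsmul_eq_mul]
  have hpk0 : ((p : ℝ≥0∞) ^ k) ≠ 0 := by
    apply pow_ne_zero
    exact Nat.cast_ne_zero.mpr hp.out.ne_zero
  have hpktop : ((p : ℝ≥0∞) ^ k) ≠ ⊤ := by
    apply ENNReal.pow_ne_top
    exact ENNReal.natCast_ne_top p
  have hcardlt : O.card < p ^ k := by
    have hss : O ⊂ Finset.univ := by
      rw [Finset.ssubset_iff_of_subset (Finset.subset_univ O)]
      exact ⟨_, Finset.mem_univ _, hbO⟩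
    have := Finset.card_lt_card hss
    rwa [Finset.card_univ, ZMod.card] at this
  rcases he.toPreErgodic.prob_eq_zero_or_one hSmeas hSinv with h0 | h1
  · rw [hmeasS] at h0
    rcases mul_eq_zero.mp h0 with hc | hc
    · have : O.card = 0 := by exact_mod_cast hc
      rw [Finset.card_eq_zero] at this
      rw [this] at haO
      exact absurd haO (Finset.notMem_empty _)
    · exact absurd hc (ENNReal.inv_ne_zero.mpr hpktop)
  · rw [hmeasS] at h1
    have h2 : (O.card : ℝ≥0∞) * (((p : ℝ≥0∞) ^ k)⁻¹ * (p : ℝ≥0∞) ^ k)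
        = 1 * (p : ℝ≥0∞) ^ k := by
      rw [← mul_assoc, h1]
    rw [ENNReal.inv_mul_cancel hpk0 hpktop, mul_one, one_mul] at h2
    have h3 : (O.card : ℝ≥0∞) = ((p ^ k : ℕ) : ℝ≥0∞) := by rw [h2, Nat.cast_pow]
    have h4 : O.card = p ^ k := Nat.cast_injective h3
    omega


/-- Criterion of ergodicity with the base point `0`: a compatible `f` whose coordinate
subfunctions are all permutations of the residues mod `p` is ergodic w.r.t. `μp p` iff
`φ_0` is transitive and every permutation
`F_{k,0} = φ_{k,f_{k−1}^{(p^k−1)}(0)} ∘ ⋯ ∘ φ_{k,0}` is transitive. -/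
theorem ergodic_iff_Fperm_zero_transitive
    (f : ℤ_[p] → ℤ_[p]) (φ : ℕ → ℕ → ZMod p → ZMod p)
    (hf : Compatible f) (hφ : CoordRep f φ)
    (hperm : ∀ k xb, xb < p ^ k → Function.Bijective (φ k xb)) :
    Ergodic f (μp p) ↔
      (IsTransitive (φ 0 0) ∧ ∀ k, 1 ≤ k → IsTransitive (Fperm φ f k 0)) := by
  rw [← all_trans_iff hf hφ hperm]
  exact ⟨trans_of_ergodic hf hφ hperm, ergodic_of_trans hf hφ hperm⟩
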